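/- arXiv:2011.14192 — 7 statements merged into one kernel-verified Lean document; each statement's English description precedes it below -/
import Mathlib

section
/- Let G=(V,E) be a finite directed graph on n vertices containing four pairwise distinct vertices s1, t1, s2, t2, and let G' be the delegation graph constructed from (G, s1, t1, s2, t2) as described. If G contains two vertex-disjoint directed paths, one from s1 to t1 and one from s2 to t2, then (G', 17n) is a yes-instance of Resolve Delegation. -/
/-- `v` is a sink of the directed graph with edge relation `E`: it has out-degree 0. -/
def IsSink {V : Type} (E : V → V → Prop) (v : V) : Prop := ∀ u, ¬ E v u

/-- Out-degree of `v` in the directed graph with edge relation `E`. -/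
noncomputable def outDeg {V : Type} (E : V → V → Prop) (v : V) : ℕ := Set.ncard {u | E v u}

/-- In-degree of `v` in the directed graph with edge relation `E`. -/
noncomputable def inDeg {V : Type} (E : V → V → Prop) (v : V) : ℕ := Set.ncard {u | E u v}

/-- `H` is a feasible solution of the Resolve Delegation instance `(E, lam)`:
`H` is a spanning subgraph of `E`, contains no directed cycle, every non-sink
vertex has out-degree exactly 1 in `H`, and for every sink `t` the number of
vertices having a directed path to `t` in `H` (including `t`) is at most `lam`. -/
def FeasibleSolution {V : Type} (E H : V → V → Prop) (lam : ℕ) : Prop :=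
  (∀ u v, H u v → E u v) ∧
  (∀ v, ¬ Relation.TransGen H v v) ∧
  (∀ v, ¬ IsSink E v → Set.ncard {u | H v u} = 1) ∧
  (∀ t, IsSink E t → Set.ncard {v | Relation.ReflTransGen H v t} ≤ lam)

/-- The Resolve Delegation instance `(E, lam)` is a yes-instance. -/
def YesInstance {V : Type} (E : V → V → Prop) (lam : ℕ) : Prop :=
  ∃ H : V → V → Prop, FeasibleSolution E H lam
/-- `p` is a directed path in the graph with edge relation `E` from `s` to `t`. -/
def IsPath {V : Type} (E : V → V → Prop) (s t : V) (p : List V) : Prop :=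
  p ≠ [] ∧ p.head? = some s ∧ p.getLast? = some t ∧ List.Chain' E p ∧ p.Nodup

/-- Vertex set of the delegation graph `G'` constructed from an `n`-vertex instance of
Two Vertex Disjoint Paths: the vertices `a_v` for `v ∈ V` together with the pairwise
disjoint path sets `D1, D1', D2, D2', D3` of sizes `10n, 5n, 5n, 10n, 15n`. -/
inductive RDVert (V : Type) (n : ℕ) : Type
  | orig : V → RDVert V n              -- the vertex a_v for v ∈ V
  | d1   : Fin (10 * n) → RDVert V n   -- the path D1,  last vertex d1   has index 10n-1
  | d1'  : Fin (5 * n) → RDVert V n    -- the path D1', first vertex d1' has index 0, last is t1'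
  | d2   : Fin (5 * n) → RDVert V n    -- the path D2,  last vertex d2   has index 5n-1
  | d2'  : Fin (10 * n) → RDVert V n   -- the path D2', first vertex d2' has index 0, last is t2'
  | d3   : Fin (15 * n) → RDVert V n   -- the path D3,  last vertex t3'  has index 15n-1
  deriving DecidableEq, Fintype

/-- Edge relation of the delegation graph `G'` constructed from the Two Vertex Disjoint
Paths instance `(E, s₁, t₁, s₂, t₂)` on an `n`-vertex graph. -/
inductive RDAdj {V : Type} (E : V → V → Prop) (s₁ t₁ s₂ t₂ : V) (n : ℕ) :
    RDVert V n → RDVert V n → Prop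
  | orig {u v : V} : E u v → RDAdj E s₁ t₁ s₂ t₂ n (.orig u) (.orig v)
  | d1step {i j : Fin (10 * n)} (h : (j : ℕ) = (i : ℕ) + 1) :
      RDAdj E s₁ t₁ s₂ t₂ n (.d1 i) (.d1 j)
  | d1'step {i j : Fin (5 * n)} (h : (j : ℕ) = (i : ℕ) + 1) :
      RDAdj E s₁ t₁ s₂ t₂ n (.d1' i) (.d1' j)
  | d2step {i j : Fin (5 * n)} (h : (j : ℕ) = (i : ℕ) + 1) :
      RDAdj E s₁ t₁ s₂ t₂ n (.d2 i) (.d2 j)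
  | d2'step {i j : Fin (10 * n)} (h : (j : ℕ) = (i : ℕ) + 1) :
      RDAdj E s₁ t₁ s₂ t₂ n (.d2' i) (.d2' j)
  | d3step {i j : Fin (15 * n)} (h : (j : ℕ) = (i : ℕ) + 1) :
      RDAdj E s₁ t₁ s₂ t₂ n (.d3 i) (.d3 j)
  | d1ToS1 {i : Fin (10 * n)} (h : (i : ℕ) = 10 * n - 1) :
      RDAdj E s₁ t₁ s₂ t₂ n (.d1 i) (.orig s₁)
  | d2ToS2 {i : Fin (5 * n)} (h : (i : ℕ) = 5 * n - 1) :
      RDAdj E s₁ t₁ s₂ t₂ n (.d2 i) (.orig s₂)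
  | t1ToD1' {j : Fin (5 * n)} (h : (j : ℕ) = 0) :
      RDAdj E s₁ t₁ s₂ t₂ n (.orig t₁) (.d1' j)
  | t2ToD2' {j : Fin (10 * n)} (h : (j : ℕ) = 0) :
      RDAdj E s₁ t₁ s₂ t₂ n (.orig t₂) (.d2' j)
  | origToT3 {v : V} {i : Fin (15 * n)} (h : (i : ℕ) = 15 * n - 1) :
      RDAdj E s₁ t₁ s₂ t₂ n (.orig v) (.d3 i)

/-! Every vertex delegates along the two disjoint paths: `D1` feeds into `a_{s₁}`, the path
`p₁` is followed to `a_{t₁}` and continued through `D1'` to `t1'`; symmetrically for `p₂`, and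
every other `a_v` delegates directly to `t3'`. Delegation preserves the three basins
`D1 ∪ a(p₁) ∪ D1'`, `D2 ∪ a(p₂) ∪ D2'` and `a(V ∖ (p₁ ∪ p₂)) ∪ D3`, each with at most `n + 15n`
vertices, and strictly decreases an explicit rank, so there are no cycles. -/

theorem yesInstance_of_delegation {α : Type} {β : Type*} [Finite α] {E : α → α → Prop} {lam : ℕ}
    (f : α → Option α) (rank : α → ℕ) (basin : α → β)
    (hadj : ∀ ⦃u v⦄, f u = some v → E u v)
    (hsink : ∀ ⦃u⦄, f u = none → IsSink E u)
    (hrank : ∀ ⦃u v⦄, f u = some v → rank v < rank u)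
    (hbasin : ∀ ⦃u v⦄, f u = some v → basin u = basin v)
    (hcard : ∀ b, {u | basin u = b}.ncard ≤ lam) :
    YesInstance E lam := by
  refine ⟨fun u v => f u = some v, hadj, fun v hv => ?_, fun v hv => ?_, fun t _ => ?_⟩
  · have hlt : Relation.TransGen (fun a b : ℕ => b < a) (rank v) (rank v) := hv.lift rank hrank
    rw [Relation.transGen_eq_self] at hlt
    exact lt_irrefl _ hlt
  · obtain ⟨w, hw⟩ := Option.ne_none_iff_exists'.mp (mt (@hsink v) hv)
    simp [hw]
  · have hreach : {v | Relation.ReflTransGen (fun u v => f u = some v) v t} ⊆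
        {u | basin u = basin t} := fun v hv => by
      have heq : Relation.ReflTransGen (· = ·) (basin v) (basin t) := hv.lift basin hbasin
      rwa [Relation.reflTransGen_eq_self] at heq
    exact (Set.ncard_le_ncard hreach (Set.toFinite _)).trans (hcard _)

namespace List

variable {α : Type*} [DecidableEq α] {p : List α} {v w : α}

-- `idxOf v = length` when `v ∉ p`, so `pathSucc` is `none` off the path as well as at its end.
def pathSucc (p : List α) (v : α) : Option α := p[p.idxOf v + 1]?

theorem pathSucc_mem (h : p.pathSucc v = some w) : w ∈ p :=
  mem_of_getElem? h

theorem IsChain.rel_pathSucc {R : α → α → Prop} (hp : IsChain R p) (h : p.pathSucc v = some w) :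
    R v w := by
  obtain ⟨hlt, rfl⟩ := getElem?_eq_some_iff.mp h
  simpa only [getElem_idxOf] using hp.getElem _ hlt

theorem Nodup.idxOf_pathSucc (hp : p.Nodup) (h : p.pathSucc v = some w) :
    p.idxOf w = p.idxOf v + 1 := by
  obtain ⟨hlt, rfl⟩ := getElem?_eq_some_iff.mp h
  exact hp.idxOf_getElem _ hlt

theorem eq_of_pathSucc_eq_none {t : α} (hv : v ∈ p) (ht : p.getLast? = some t)
    (h : p.pathSucc v = none) : v = t := by
  have hlt := idxOf_lt_length_iff.mpr hv
  rw [pathSucc, getElem?_eq_none_iff] at h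
  rw [getLast?_eq_getElem?, getElem?_eq_some_iff] at ht
  obtain ⟨_, rfl⟩ := ht
  conv_lhs => rw [← getElem_idxOf hlt]
  congr 1
  omega

end List

theorem Set.ncard_le_of_subset_range {α β : Type*} [Finite β] {s : Set α} {f : β → α}
    (h : s ⊆ Set.range f) : s.ncard ≤ Nat.card β :=
  (Set.ncard_le_ncard h (Set.finite_range f)).trans (Finite.card_range_le f)

namespace RDVert

variable {V : Type} [DecidableEq V] {n : ℕ}

def delegate (s₁ s₂ : V) (p₁ p₂ : List V) (hn : 0 < n) : RDVert V n → Option (RDVert V n)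
  | orig v =>
    if v ∈ p₁ then some ((p₁.pathSucc v).elim (d1' ⟨0, by omega⟩) orig)
    else if v ∈ p₂ then some ((p₂.pathSucc v).elim (d2' ⟨0, by omega⟩) orig)
    else some (d3 ⟨15 * n - 1, by omega⟩)
  | d1 i => some (if h : i + 1 < 10 * n then d1 ⟨i + 1, h⟩ else orig s₁)
  | d1' i => if h : i + 1 < 5 * n then some (d1' ⟨i + 1, h⟩) else none
  | d2 i => some (if h : i + 1 < 5 * n then d2 ⟨i + 1, h⟩ else orig s₂)
  | d2' i => if h : i + 1 < 10 * n then some (d2' ⟨i + 1, h⟩) else none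
  | d3 i => if h : i + 1 < 15 * n then some (d3 ⟨i + 1, h⟩) else none

def rank (p₁ p₂ : List V) : RDVert V n → ℕ
  | orig v =>
    if v ∈ p₁ then 5 * n + (p₁.length - p₁.idxOf v)
    else if v ∈ p₂ then 10 * n + (p₂.length - p₂.idxOf v)
    else 2
  | d1 i => 15 * n + p₁.length - i
  | d1' i => 5 * n - i
  | d2 i => 15 * n + p₂.length - i
  | d2' i => 10 * n - i
  | d3 i => 15 * n - i

def basin (p₁ p₂ : List V) : RDVert V n → Fin 3
  | orig v => if v ∈ p₁ then 0 else if v ∈ p₂ then 1 else 2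
  | d1 _ | d1' _ => 0
  | d2 _ | d2' _ => 1
  | d3 _ => 2

variable {E : V → V → Prop} {s₁ t₁ s₂ t₂ : V} {p₁ p₂ : List V} {hn : 0 < n}

theorem delegate_adj (h₁ : p₁.IsChain E) (h₂ : p₂.IsChain E)
    (ht₁ : p₁.getLast? = some t₁) (ht₂ : p₂.getLast? = some t₂) ⦃u x : RDVert V n⦄
    (h : delegate s₁ s₂ p₁ p₂ hn u = some x) : RDAdj E s₁ t₁ s₂ t₂ n u x := by
  cases u with
  | orig v =>
    simp only [delegate] at h
    split_ifs at h with hv₁ hv₂ <;> cases h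
    · cases hw : p₁.pathSucc v with
      | none => rw [List.eq_of_pathSucc_eq_none hv₁ ht₁ hw]; exact .t1ToD1' rfl
      | some w => exact .orig (h₁.rel_pathSucc hw)
    · cases hw : p₂.pathSucc v with
      | none => rw [List.eq_of_pathSucc_eq_none hv₂ ht₂ hw]; exact .t2ToD2' rfl
      | some w => exact .orig (h₂.rel_pathSucc hw)
    · exact .origToT3 rfl
  | d1 i =>
    simp only [delegate] at h
    split_ifs at h with hi <;> cases h
    · exact .d1step rfl
    · exact .d1ToS1 (by omega)
  | d2 i =>
    simp only [delegate] at h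
    split_ifs at h with hi <;> cases h
    · exact .d2step rfl
    · exact .d2ToS2 (by omega)
  | d1' i | d2' i | d3 i =>
    simp only [delegate] at h
    split_ifs at h
    cases h
    first | exact .d1'step rfl | exact .d2'step rfl | exact .d3step rfl

theorem isSink_of_delegate_eq_none ⦃u : RDVert V n⦄ (h : delegate s₁ s₂ p₁ p₂ hn u = none) :
    IsSink (RDAdj E s₁ t₁ s₂ t₂ n) u := by
  intro x hx
  cases hx <;> simp only [delegate] at h <;> split_ifs at h <;> omega

theorem rank_delegate_lt (h₁ : p₁.Nodup) (h₂ : p₂.Nodup) (hs₁ : s₁ ∈ p₁) (hs₂ : s₂ ∈ p₂)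
    (hdisj : ∀ x ∈ p₁, x ∉ p₂) ⦃u x : RDVert V n⦄ (h : delegate s₁ s₂ p₁ p₂ hn u = some x) :
    rank p₁ p₂ x < rank p₁ p₂ u := by
  cases u with
  | orig v =>
    simp only [delegate] at h
    split_ifs at h with hv₁ hv₂ <;> cases h
    · have := List.idxOf_lt_length_iff.mpr hv₁
      cases hw : p₁.pathSucc v with
      | none => simpa [rank, hv₁] using this
      | some w =>
        have hidx := h₁.idxOf_pathSucc hw
        simp only [rank, Option.elim_some, List.pathSucc_mem hw, hidx, hv₁, ↓reduceIte]
        omega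
    · have := List.idxOf_lt_length_iff.mpr hv₂
      cases hw : p₂.pathSucc v with
      | none => simpa [rank, hv₁, hv₂] using this
      | some w =>
        have hidx := h₂.idxOf_pathSucc hw
        have hw₂ := List.pathSucc_mem hw
        have hw₁ : w ∉ p₁ := fun hw₁ => hdisj w hw₁ hw₂
        simp only [rank, Option.elim_some, hw₁, hw₂, hidx, hv₁, hv₂, ↓reduceIte]
        omega
    · simp only [rank, hv₁, hv₂, ↓reduceIte]
      omega
  | d1 i =>
    simp only [delegate] at h
    split_ifs at h with hi <;> cases h
    · simp only [rank]; omega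
    · simp only [rank, hs₁, ↓reduceIte]; omega
  | d2 i =>
    simp only [delegate] at h
    split_ifs at h with hi <;> cases h
    · simp only [rank]; omega
    · have hs₁₂ : s₂ ∉ p₁ := fun hs => hdisj s₂ hs hs₂
      simp only [rank, hs₁₂, hs₂, ↓reduceIte]; omega
  | d1' i | d2' i | d3 i =>
    simp only [delegate] at h
    split_ifs at h
    cases h
    simp only [rank]
    omega

theorem basin_delegate (hs₁ : s₁ ∈ p₁) (hs₂ : s₂ ∈ p₂) (hdisj : ∀ x ∈ p₁, x ∉ p₂)
    ⦃u x : RDVert V n⦄ (h : delegate s₁ s₂ p₁ p₂ hn u = some x) :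
    basin p₁ p₂ u = basin p₁ p₂ x := by
  cases u with
  | orig v =>
    simp only [delegate] at h
    split_ifs at h with hv₁ hv₂ <;> cases h
    · cases hw : p₁.pathSucc v with
      | none => simp [basin, hv₁]
      | some w => simp [basin, hv₁, List.pathSucc_mem hw]
    · cases hw : p₂.pathSucc v with
      | none => simp [basin, hv₁, hv₂]
      | some w =>
        have hw₂ := List.pathSucc_mem hw
        have hw₁ : w ∉ p₁ := fun hw₁ => hdisj w hw₁ hw₂
        simp [basin, hv₁, hv₂, hw₁, hw₂]
    · simp [basin, hv₁, hv₂]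
  | d1 i | d2 i =>
    simp only [delegate] at h
    have hs₁₂ : s₂ ∉ p₁ := fun hs => hdisj s₂ hs hs₂
    split_ifs at h <;> cases h <;> simp [basin, hs₁, hs₂, hs₁₂]
  | d1' i | d2' i | d3 i =>
    simp only [delegate] at h
    split_ifs at h
    cases h
    rfl

theorem ncard_basin_le [Fintype V] (k : Fin 3) :
    {v : RDVert V n | basin p₁ p₂ v = k}.ncard ≤ Fintype.card V + 15 * n := by
  fin_cases k
  · refine (Set.ncard_le_of_subset_range (f := Sum.elim orig (Sum.elim d1 d1')) ?_).trans_eq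
      (by simp only [Nat.card_eq_fintype_card, Fintype.card_sum, Fintype.card_fin]; ring)
    rintro (v | i | i | i | i | i) hv <;> simp_all [basin]
  · refine (Set.ncard_le_of_subset_range (f := Sum.elim orig (Sum.elim d2 d2')) ?_).trans_eq
      (by simp only [Nat.card_eq_fintype_card, Fintype.card_sum, Fintype.card_fin]; ring)
    rintro (v | i | i | i | i | i) hv <;> simp_all [basin]
  · refine (Set.ncard_le_of_subset_range (f := Sum.elim orig d3) ?_).trans_eq (by simp)
    rintro (v | i | i | i | i | i) hv <;> simp_all [basin]

end RDVert

theorem stmt_0_general {V : Type} [Fintype V] [DecidableEq V]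
    (E : V → V → Prop)
    (s₁ t₁ s₂ t₂ : V)
    (n : ℕ) (hn : n = Fintype.card V)
    (p₁ p₂ : List V)
    (hp₁ : IsPath E s₁ t₁ p₁) (hp₂ : IsPath E s₂ t₂ p₂)
    (hdisj : ∀ x ∈ p₁, x ∉ p₂) :
    YesInstance (RDAdj E s₁ t₁ s₂ t₂ n) (17 * n) := by
  obtain ⟨-, hs₁, ht₁, hc₁, hnd₁⟩ := hp₁
  obtain ⟨-, hs₂, ht₂, hc₂, hnd₂⟩ := hp₂
  have hmem₁ : s₁ ∈ p₁ := List.mem_of_mem_head? hs₁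
  have hmem₂ : s₂ ∈ p₂ := List.mem_of_mem_head? hs₂
  have hn₀ : 0 < n := hn ▸ Fintype.card_pos_iff.mpr ⟨s₁⟩
  exact yesInstance_of_delegation (RDVert.delegate s₁ s₂ p₁ p₂ hn₀) (RDVert.rank p₁ p₂)
    (RDVert.basin p₁ p₂) (RDVert.delegate_adj hc₁ hc₂ ht₁ ht₂)
    RDVert.isSink_of_delegate_eq_none (RDVert.rank_delegate_lt hnd₁ hnd₂ hmem₁ hmem₂ hdisj)
    (RDVert.basin_delegate hmem₁ hmem₂ hdisj) fun k => (RDVert.ncard_basin_le k).trans (by omega)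

/-- if `G` contains two vertex-disjoint directed paths, one from `s₁` to `t₁`
and one from `s₂` to `t₂`, then `(G', 17n)` is a yes-instance of Resolve Delegation. -/
theorem stmt_0 {V : Type} [Fintype V] [DecidableEq V]
    (E : V → V → Prop) (hloop : ∀ v, ¬ E v v)
    (s₁ t₁ s₂ t₂ : V)
    (hdist : s₁ ≠ t₁ ∧ s₁ ≠ s₂ ∧ s₁ ≠ t₂ ∧ t₁ ≠ s₂ ∧ t₁ ≠ t₂ ∧ s₂ ≠ t₂)
    (n : ℕ) (hn : n = Fintype.card V)
    (p₁ p₂ : List V)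
    (hp₁ : IsPath E s₁ t₁ p₁) (hp₂ : IsPath E s₂ t₂ p₂)
    (hdisj : ∀ x ∈ p₁, x ∉ p₂) :
    YesInstance (RDAdj E s₁ t₁ s₂ t₂ n) (17 * n) :=
  stmt_0_general E s₁ t₁ s₂ t₂ n hn p₁ p₂ hp₁ hp₂ hdisj
end

section
/- Let G=(V,E) be a finite directed graph on n vertices containing four pairwise distinct vertices s1, t1, s2, t2, and let G' be the delegation graph constructed from (G, s1, t1, s2, t2) as described. If (G', 17n) is a yes-instance of Resolve Delegation, then G contains two vertex-disjoint directed paths, one from s1 to t1 and one from s2 to t2. -/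
/-!
In a feasible solution `H` every non-sink has exactly one `H`-successor, so every vertex reaches
exactly one sink and the gadget paths `D1, D1', D2, D2', D3` lie in `H`. As `D1` (`10n` vertices)
flows into `a_{s₁}`, the sink of `a_{s₁}` is neither `t₂'` (`10n + 10n > 17n`) nor `t₃'`
(`15n + 10n`), so it is `t₁'`; likewise the sink of `a_{s₂}` is `t₂'`, since `t₁'` would collect
`5n + 10n + 5n` vertices and `t₃'` `15n + 5n`. The `H`-walk from `a_{s₁}` stays among the `a_v`
until it leaves along `(a_{t₁}, d₁')`, the only exit from which `t₁'` is still reachable; before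
that it is a path from `s₁` to `t₁` in `G`, and similarly for `s₂`. The two paths are disjoint
because their vertices reach different sinks.
-/

open Relation

theorem Relation.ReflTransGen.of_fin_succ {α : Type*} {r : α → α → Prop} {k : ℕ} (f : Fin k → α)
    (hf : ∀ i j : Fin k, (j : ℕ) = i + 1 → r (f i) (f j)) {i j : Fin k} (hij : i ≤ j) :
    ReflTransGen r (f i) (f j) := by
  obtain ⟨d, hd⟩ : ∃ d, (j : ℕ) = i + d := ⟨j - i, by rw [Fin.le_def] at hij; omega⟩
  induction d generalizing j with
  | zero => obtain rfl : j = i := Fin.ext (by simpa using hd); exact .refl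
  | succ d ih =>
    have hlt : (i : ℕ) + d < k := by omega
    exact (ih (j := ⟨i + d, hlt⟩) (by simp [Fin.le_def]) rfl).tail (hf _ _ (by dsimp only; omega))

theorem Relation.ReflTransGen.mem_of_closed {α : Type*} {r : α → α → Prop} {S : Set α}
    (hS : ∀ a b, r a b → a ∈ S → b ∈ S) {a b : α} (h : ReflTransGen r a b) (ha : a ∈ S) :
    b ∈ S := by
  induction h with
  | refl => exact ha
  | tail _ hbc ih => exact hS _ _ hbc ih

theorem IsPath.singleton {V : Type} (E : V → V → Prop) (v : V) : IsPath E v v [v] :=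
  ⟨List.cons_ne_nil _ _, rfl, rfl, List.isChain_singleton v, List.nodup_singleton v⟩

theorem IsPath.cons {V : Type} {E : V → V → Prop} {v w u : V} {p : List V} (hp : IsPath E w u p)
    (hvw : E v w) (hv : v ∉ p) : IsPath E v u (v :: p) := by
  obtain ⟨-, hhead, hlast, hchain, hnodup⟩ := hp
  refine ⟨List.cons_ne_nil _ _, rfl, ?_, List.isChain_cons.2 ⟨?_, hchain⟩,
    List.nodup_cons.2 ⟨hv, hnodup⟩⟩
  · simp [List.getLast?_cons, hlast]
  · simp [hhead, hvw]

/-- The path is the part of the `H`-walk before it first leaves `range f`, which by `hexit`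
happens at `f u`. -/
theorem exists_isPath_of_reflTransGen {V W : Type} {E : V → V → Prop} {H : W → W → Prop}
    (hacyc : ∀ w, ¬ TransGen H w w) {f : V → W} (hE : ∀ x y, H (f x) (f y) → E x y)
    {t : W} (ht : t ∉ Set.range f) {u : V}
    (hexit : ∀ x w, H (f x) w → w ∉ Set.range f → ReflTransGen H w t → x = u)
    {v : V} (hv : ReflTransGen H (f v) t) :
    ∃ p, IsPath E v u p ∧ ∀ x ∈ p, ReflTransGen H (f x) t := by
  suffices key : ∀ w, ReflTransGen H w t → ∀ v, w = f v → ∃ p, IsPath E v u p ∧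
      ∀ x ∈ p, ReflTransGen H (f v) (f x) ∧ ReflTransGen H (f x) t from
    (key _ hv v rfl).imp fun _ hp => ⟨hp.1, fun x hx => (hp.2 x hx).2⟩
  intro w hw
  induction hw using ReflTransGen.head_induction_on with
  | refl => rintro v rfl; exact absurd ⟨v, rfl⟩ ht
  | @head w z hwz hzt ih =>
    rintro v rfl
    by_cases hz : z ∈ Set.range f
    · obtain ⟨y, rfl⟩ := hz
      obtain ⟨p, hp, hpy⟩ := ih y rfl
      have hvp : v ∉ p := fun hv => hacyc _ (TransGen.head' hwz (hpy v hv).1)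
      refine ⟨v :: p, hp.cons (hE _ _ hwz) hvp, ?_⟩
      rintro x (_ | ⟨_, hx⟩)
      · exact ⟨.refl, hzt.head hwz⟩
      · exact ⟨(hpy x hx).1.head hwz, (hpy x hx).2⟩
    · obtain rfl := hexit v z hwz hz hzt
      refine ⟨[v], IsPath.singleton E v, fun x hx => ?_⟩
      obtain rfl := List.mem_singleton.1 hx
      exact ⟨.refl, hzt.head hwz⟩

namespace FeasibleSolution

variable {V : Type} {E H : V → V → Prop} {lam : ℕ}

theorem exists_rel (hF : FeasibleSolution E H lam) {v : V} (hv : ¬ IsSink E v) : ∃ w, H v w := by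
  obtain ⟨w, hw⟩ := Set.ncard_eq_one.1 (hF.2.2.1 v hv)
  exact ⟨w, (Set.ext_iff.1 hw w).2 rfl⟩

theorem rel_unique (hF : FeasibleSolution E H lam) {v w w' : V} (hw : H v w) (hw' : H v w') :
    w = w' := by
  obtain ⟨c, hc⟩ := Set.ncard_eq_one.1 (hF.2.2.1 v fun hv => hv w (hF.1 v w hw))
  have hw : w ∈ ({c} : Set V) := hc ▸ hw
  have hw' : w' ∈ ({c} : Set V) := hc ▸ hw'
  exact hw.trans hw'.symm

theorem rel_of_forall_eq (hF : FeasibleSolution E H lam) {v w : V} (hvw : E v w)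
    (huniq : ∀ u, E v u → u = w) : H v w := by
  obtain ⟨u, hu⟩ := hF.exists_rel fun hv => hv w hvw
  exact huniq u (hF.1 v u hu) ▸ hu

theorem eq_of_isSink (hF : FeasibleSolution E H lam) {t v : V} (ht : IsSink E t)
    (h : ReflTransGen H t v) : t = v := by
  rcases h.cases_head with rfl | ⟨w, htw, _⟩
  · rfl
  · exact absurd (hF.1 t w htw) (ht w)

theorem isSink_unique (hF : FeasibleSolution E H lam) {v t t' : V} (ht : IsSink E t)
    (ht' : IsSink E t') (h : ReflTransGen H v t) (h' : ReflTransGen H v t') : t = t' := by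
  induction h using ReflTransGen.head_induction_on with
  | refl => exact hF.eq_of_isSink ht h'
  | head hvw _ ih =>
    rcases h'.cases_head with rfl | ⟨w', hvw', h'⟩
    · exact absurd (hF.1 _ _ hvw) (ht' _)
    · exact ih (hF.rel_unique hvw' hvw ▸ h')

theorem exists_isSink [Finite V] (hF : FeasibleSolution E H lam) (v : V) :
    ∃ t, IsSink E t ∧ ReflTransGen H v t := by
  have : IsTrans V (flip (TransGen H)) := ⟨fun _ _ _ h₁ h₂ => h₂.trans h₁⟩
  have : Std.Irrefl (flip (TransGen H)) := ⟨hF.2.1⟩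
  induction v using (Finite.wellFounded_of_trans_of_irrefl (flip (TransGen H))).induction with
  | _ v ih =>
    by_cases hv : IsSink E v
    · exact ⟨v, hv, .refl⟩
    · obtain ⟨w, hvw⟩ := hF.exists_rel hv
      obtain ⟨t, ht, hwt⟩ := ih w (.single hvw)
      exact ⟨t, ht, hwt.head hvw⟩

theorem card_le [Finite V] (hF : FeasibleSolution E H lam) {ι : Type*} {f : ι → V}
    (hf : Function.Injective f) {t : V} (ht : IsSink E t) (hft : ∀ i, ReflTransGen H (f i) t) :
    Nat.card ι ≤ lam :=
  calc Nat.card ι = (Set.range f).ncard := (Set.ncard_range_of_injective hf).symm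
    _ ≤ {v | ReflTransGen H v t}.ncard :=
      Set.ncard_le_ncard (Set.range_subset_iff.2 hft) (Set.toFinite _)
    _ ≤ lam := hF.2.2.2 t ht

end FeasibleSolution

namespace RDAdj

variable {V : Type} {E : V → V → Prop} {s₁ t₁ s₂ t₂ : V} {n : ℕ}

theorem eq_of_notMem_range_orig {v w w' : RDVert V n} (hv : v ∉ Set.range RDVert.orig)
    (hw : RDAdj E s₁ t₁ s₂ t₂ n v w) (hw' : RDAdj E s₁ t₁ s₂ t₂ n v w') : w = w' := by
  cases hw <;> cases hw' <;> first
    | exact absurd ⟨_, rfl⟩ hv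
    | rfl
    | (congr 1; ext; omega)
    | omega

theorem of_orig_orig {x y : V} (h : RDAdj E s₁ t₁ s₂ t₂ n (.orig x) (.orig y)) : E x y := by
  cases h; assumption

theorem exit_cases {x : V} {w : RDVert V n} (h : RDAdj E s₁ t₁ s₂ t₂ n (.orig x) w)
    (hw : w ∉ Set.range RDVert.orig) :
    (x = t₁ ∧ w ∈ Set.range RDVert.d1') ∨ (x = t₂ ∧ w ∈ Set.range RDVert.d2') ∨
      w ∈ Set.range RDVert.d3 := by
  cases h with
  | orig => exact absurd ⟨_, rfl⟩ hw
  | t1ToD1' => exact .inl ⟨rfl, _, rfl⟩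
  | t2ToD2' => exact .inr (.inl ⟨rfl, _, rfl⟩)
  | origToT3 => exact .inr (.inr ⟨_, rfl⟩)

theorem mem_range_d1' {v w : RDVert V n} (h : RDAdj E s₁ t₁ s₂ t₂ n v w)
    (hv : v ∈ Set.range RDVert.d1') : w ∈ Set.range RDVert.d1' := by
  obtain ⟨i, rfl⟩ := hv; cases h; exact ⟨_, rfl⟩

theorem mem_range_d2' {v w : RDVert V n} (h : RDAdj E s₁ t₁ s₂ t₂ n v w)
    (hv : v ∈ Set.range RDVert.d2') : w ∈ Set.range RDVert.d2' := by
  obtain ⟨i, rfl⟩ := hv; cases h; exact ⟨_, rfl⟩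

theorem mem_range_d3 {v w : RDVert V n} (h : RDAdj E s₁ t₁ s₂ t₂ n v w)
    (hv : v ∈ Set.range RDVert.d3) : w ∈ Set.range RDVert.d3 := by
  obtain ⟨i, rfl⟩ := hv; cases h; exact ⟨_, rfl⟩

theorem isSink_cases (hn : 0 < n) {t : RDVert V n} (ht : IsSink (RDAdj E s₁ t₁ s₂ t₂ n) t) :
    t ∈ Set.range RDVert.d1' ∨ t ∈ Set.range RDVert.d2' ∨ t ∈ Set.range RDVert.d3 := by
  cases t with
  | orig v => exact absurd (RDAdj.origToT3 (i := ⟨15 * n - 1, by omega⟩) rfl) (ht _)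
  | d1 i =>
    by_cases hi : (i : ℕ) + 1 < 10 * n
    · exact absurd (RDAdj.d1step (j := ⟨i + 1, hi⟩) rfl) (ht _)
    · exact absurd (RDAdj.d1ToS1 (by omega)) (ht _)
  | d2 i =>
    by_cases hi : (i : ℕ) + 1 < 5 * n
    · exact absurd (RDAdj.d2step (j := ⟨i + 1, hi⟩) rfl) (ht _)
    · exact absurd (RDAdj.d2ToS2 (by omega)) (ht _)
  | d1' j => exact .inl ⟨j, rfl⟩
  | d2' j => exact .inr (.inl ⟨j, rfl⟩)
  | d3 j => exact .inr (.inr ⟨j, rfl⟩)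

end RDAdj

namespace FeasibleSolution

variable {V : Type} {E : V → V → Prop} {s₁ t₁ s₂ t₂ : V} {n : ℕ}
  {H : RDVert V n → RDVert V n → Prop} {lam : ℕ}

theorem rel_of_notMem_range_orig (hF : FeasibleSolution (RDAdj E s₁ t₁ s₂ t₂ n) H lam)
    {v w : RDVert V n} (hv : v ∉ Set.range RDVert.orig) (hvw : RDAdj E s₁ t₁ s₂ t₂ n v w) :
    H v w :=
  hF.rel_of_forall_eq hvw fun _ hu => RDAdj.eq_of_notMem_range_orig hv hu hvw

theorem reflTransGen_of_isSink (hF : FeasibleSolution (RDAdj E s₁ t₁ s₂ t₂ n) H lam) {k : ℕ}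
    {f : Fin k → RDVert V n} (hf : ∀ i, f i ∉ Set.range RDVert.orig)
    (hadj : ∀ i j : Fin k, (j : ℕ) = i + 1 → RDAdj E s₁ t₁ s₂ t₂ n (f i) (f j))
    {j : Fin k} (hj : IsSink (RDAdj E s₁ t₁ s₂ t₂ n) (f j)) (i : Fin k) :
    ReflTransGen H (f i) (f j) := by
  refine ReflTransGen.of_fin_succ f
    (fun i j h => hF.rel_of_notMem_range_orig (hf i) (hadj i j h)) ?_
  by_contra! hji
  exact hj _ (hadj j ⟨j + 1, by omega⟩ rfl)

theorem reflTransGen_d1_orig (hF : FeasibleSolution (RDAdj E s₁ t₁ s₂ t₂ n) H lam)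
    (i : Fin (10 * n)) : ReflTransGen H (.d1 i) (.orig s₁) := by
  have hlast : 10 * n - 1 < 10 * n := by have := i.isLt; omega
  have hD1 := ReflTransGen.of_fin_succ RDVert.d1
    (fun _ _ h => hF.rel_of_notMem_range_orig (by simp) (.d1step h)) (i := i) (j := ⟨_, hlast⟩)
    (by simp only [Fin.le_def]; omega)
  exact hD1.tail (hF.rel_of_notMem_range_orig (by simp) (.d1ToS1 rfl))

theorem reflTransGen_d2_orig (hF : FeasibleSolution (RDAdj E s₁ t₁ s₂ t₂ n) H lam)
    (i : Fin (5 * n)) : ReflTransGen H (.d2 i) (.orig s₂) := by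
  have hlast : 5 * n - 1 < 5 * n := by have := i.isLt; omega
  have hD2 := ReflTransGen.of_fin_succ RDVert.d2
    (fun _ _ h => hF.rel_of_notMem_range_orig (by simp) (.d2step h)) (i := i) (j := ⟨_, hlast⟩)
    (by simp only [Fin.le_def]; omega)
  exact hD2.tail (hF.rel_of_notMem_range_orig (by simp) (.d2ToS2 rfl))

theorem exit_eq_t₁ (hF : FeasibleSolution (RDAdj E s₁ t₁ s₂ t₂ n) H lam) {x : V}
    {w : RDVert V n} (hxw : H (.orig x) w) (hw : w ∉ Set.range RDVert.orig) {j : Fin (5 * n)}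
    (hwj : ReflTransGen H w (.d1' j)) : x = t₁ := by
  rcases RDAdj.exit_cases (hF.1 _ _ hxw) hw with ⟨rfl, -⟩ | ⟨-, hw⟩ | hw
  · rfl
  · simpa using hwj.mem_of_closed (fun _ _ h => (hF.1 _ _ h).mem_range_d2') hw
  · simpa using hwj.mem_of_closed (fun _ _ h => (hF.1 _ _ h).mem_range_d3) hw

theorem exit_eq_t₂ (hF : FeasibleSolution (RDAdj E s₁ t₁ s₂ t₂ n) H lam) {x : V}
    {w : RDVert V n} (hxw : H (.orig x) w) (hw : w ∉ Set.range RDVert.orig) {j : Fin (10 * n)}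
    (hwj : ReflTransGen H w (.d2' j)) : x = t₂ := by
  rcases RDAdj.exit_cases (hF.1 _ _ hxw) hw with ⟨-, hw⟩ | ⟨rfl, -⟩ | hw
  · simpa using hwj.mem_of_closed (fun _ _ h => (hF.1 _ _ h).mem_range_d1') hw
  · rfl
  · simpa using hwj.mem_of_closed (fun _ _ h => (hF.1 _ _ h).mem_range_d3) hw

theorem exists_isPath_t₁ (hF : FeasibleSolution (RDAdj E s₁ t₁ s₂ t₂ n) H lam) {v : V}
    {j : Fin (5 * n)} (hv : ReflTransGen H (.orig v) (.d1' j)) :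
    ∃ p, IsPath E v t₁ p ∧ ∀ x ∈ p, ReflTransGen H (.orig x) (.d1' j) :=
  exists_isPath_of_reflTransGen (f := RDVert.orig) hF.2.1
    (fun _ _ h => (hF.1 _ _ h).of_orig_orig) (by simp)
    (fun _ _ hxw hw hwj => hF.exit_eq_t₁ hxw hw hwj) hv

theorem exists_isPath_t₂ (hF : FeasibleSolution (RDAdj E s₁ t₁ s₂ t₂ n) H lam) {v : V}
    {j : Fin (10 * n)} (hv : ReflTransGen H (.orig v) (.d2' j)) :
    ∃ p, IsPath E v t₂ p ∧ ∀ x ∈ p, ReflTransGen H (.orig x) (.d2' j) :=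
  exists_isPath_of_reflTransGen (f := RDVert.orig) hF.2.1
    (fun _ _ h => (hF.1 _ _ h).of_orig_orig) (by simp)
    (fun _ _ hxw hw hwj => hF.exit_eq_t₂ hxw hw hwj) hv

variable [Fintype V]

theorem exists_reflTransGen_s₁ (hF : FeasibleSolution (RDAdj E s₁ t₁ s₂ t₂ n) H lam)
    (hlam : lam < 20 * n) :
    ∃ j, IsSink (RDAdj E s₁ t₁ s₂ t₂ n) (.d1' j) ∧ ReflTransGen H (.orig s₁) (.d1' j) := by
  obtain ⟨t, ht, hs⟩ := hF.exists_isSink (.orig s₁)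
  have hD1 (i : Fin (10 * n)) : ReflTransGen H (.d1 i) t := (hF.reflTransGen_d1_orig i).trans hs
  rcases RDAdj.isSink_cases (by omega) ht with ⟨j, rfl⟩ | ⟨j, rfl⟩ | ⟨j, rfl⟩
  · exact ⟨j, ht, hs⟩
  · have := hF.card_le (f := Sum.elim RDVert.d2' RDVert.d1)
      (by rintro (_ | _) (_ | _) h <;> cases h <;> rfl)
      ht (Sum.forall.2 ⟨hF.reflTransGen_of_isSink (by simp) (fun _ _ => .d2'step) ht, hD1⟩)
    simp only [Nat.card_eq_fintype_card, Fintype.card_sum, Fintype.card_fin] at this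
    omega
  · have := hF.card_le (f := Sum.elim RDVert.d3 RDVert.d1)
      (by rintro (_ | _) (_ | _) h <;> cases h <;> rfl)
      ht (Sum.forall.2 ⟨hF.reflTransGen_of_isSink (by simp) (fun _ _ => .d3step) ht, hD1⟩)
    simp only [Nat.card_eq_fintype_card, Fintype.card_sum, Fintype.card_fin] at this
    omega

theorem exists_reflTransGen_s₂ (hF : FeasibleSolution (RDAdj E s₁ t₁ s₂ t₂ n) H lam)
    (hlam : lam < 20 * n) {j₁ : Fin (5 * n)} (hs₁ : ReflTransGen H (.orig s₁) (.d1' j₁)) :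
    ∃ j, IsSink (RDAdj E s₁ t₁ s₂ t₂ n) (.d2' j) ∧ ReflTransGen H (.orig s₂) (.d2' j) := by
  obtain ⟨t, ht, hs⟩ := hF.exists_isSink (.orig s₂)
  have hD2 (i : Fin (5 * n)) : ReflTransGen H (.d2 i) t := (hF.reflTransGen_d2_orig i).trans hs
  rcases RDAdj.isSink_cases (by omega) ht with ⟨j, rfl⟩ | ⟨j, rfl⟩ | ⟨j, rfl⟩
  · have hD1' := hF.reflTransGen_of_isSink (by simp) (fun _ _ => .d1'step) ht
    have := hF.card_le (f := Sum.elim RDVert.d1' (Sum.elim RDVert.d1 RDVert.d2))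
      (by rintro (_ | _ | _) (_ | _ | _) h <;> cases h <;> rfl) ht
      (Sum.forall.2 ⟨hD1', Sum.forall.2
        ⟨fun i => ((hF.reflTransGen_d1_orig i).trans hs₁).trans (hD1' j₁), hD2⟩⟩)
    simp only [Nat.card_eq_fintype_card, Fintype.card_sum, Fintype.card_fin] at this
    omega
  · exact ⟨j, ht, hs⟩
  · have := hF.card_le (f := Sum.elim RDVert.d3 RDVert.d2)
      (by rintro (_ | _) (_ | _) h <;> cases h <;> rfl)
      ht (Sum.forall.2 ⟨hF.reflTransGen_of_isSink (by simp) (fun _ _ => .d3step) ht, hD2⟩)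
    simp only [Nat.card_eq_fintype_card, Fintype.card_sum, Fintype.card_fin] at this
    omega

end FeasibleSolution

theorem stmt_1_general {V : Type} [Fintype V]
    (E : V → V → Prop)
    (s₁ t₁ s₂ t₂ : V)
    (n : ℕ) (hn : n = Fintype.card V)
    (hyes : YesInstance (RDAdj E s₁ t₁ s₂ t₂ n) (17 * n)) :
    ∃ p₁ p₂ : List V,
      IsPath E s₁ t₁ p₁ ∧ IsPath E s₂ t₂ p₂ ∧ ∀ x ∈ p₁, x ∉ p₂ := by
  obtain ⟨H, hF⟩ := hyes
  have hlam : 17 * n < 20 * n := by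
    have : 0 < n := hn ▸ Fintype.card_pos_iff.2 ⟨s₁⟩
    omega
  obtain ⟨j₁, hj₁, hs₁⟩ := hF.exists_reflTransGen_s₁ hlam
  obtain ⟨j₂, hj₂, hs₂⟩ := hF.exists_reflTransGen_s₂ hlam hs₁
  obtain ⟨p₁, hp₁, hp₁t⟩ := hF.exists_isPath_t₁ hs₁
  obtain ⟨p₂, hp₂, hp₂t⟩ := hF.exists_isPath_t₂ hs₂
  refine ⟨p₁, p₂, hp₁, hp₂, fun x hx₁ hx₂ => ?_⟩
  exact nomatch hF.isSink_unique hj₁ hj₂ (hp₁t x hx₁) (hp₂t x hx₂)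

/-- if `(G', 17n)` is a yes-instance of Resolve Delegation, then `G` contains
two vertex-disjoint directed paths, one from `s₁` to `t₁` and one from `s₂` to `t₂`. -/
theorem stmt_1 {V : Type} [Fintype V] [DecidableEq V]
    (E : V → V → Prop) (hloop : ∀ v, ¬ E v v)
    (s₁ t₁ s₂ t₂ : V)
    (hdist : s₁ ≠ t₁ ∧ s₁ ≠ s₂ ∧ s₁ ≠ t₂ ∧ t₁ ≠ s₂ ∧ t₁ ≠ t₂ ∧ s₂ ≠ t₂)
    (n : ℕ) (hn : n = Fintype.card V)
    (hyes : YesInstance (RDAdj E s₁ t₁ s₂ t₂ n) (17 * n)) :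
    ∃ p₁ p₂ : List V,
      IsPath E s₁ t₁ p₁ ∧ IsPath E s₂ t₂ p₂ ∧ ∀ x ∈ p₁, x ∉ p₂ :=
  stmt_1_general E s₁ t₁ s₂ t₂ n hn hyes
end

section
/- Let φ be a (3,B2)-SAT instance with variables x_1,…,x_n and clauses C_1,…,C_m, and let G be the delegation graph constructed from φ as described. If φ has a satisfying Boolean assignment, then (G, 3) is a yes-instance of Resolve Delegation. -/
/-- Vertex set of the delegation graph constructed from a (3,B2)-SAT instance with
`n` variables and `m` clauses: vertices `a_i, ā_i, d_{i,1}, d_{i,2}` for each variable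
and `y_j` for each clause. -/
inductive SatVert (n m : ℕ) : Type
  | pos : Fin n → SatVert n m   -- a_i   (the literal  x_i)
  | neg : Fin n → SatVert n m   -- ā_i   (the literal ¬x_i)
  | d1  : Fin n → SatVert n m   -- d_{i,1}
  | d2  : Fin n → SatVert n m   -- d_{i,2}
  | y   : Fin m → SatVert n m   -- y_j
  deriving DecidableEq, Fintype

/-- The map `f` sending a literal (variable index together with its polarity) to the
corresponding literal vertex: `f(x_i) = a_i` and `f(¬x_i) = ā_i`. -/
def litVert {n m : ℕ} : Fin n × Bool → SatVert n m
  | (i, true) => .pos i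
  | (i, false) => .neg i

/-- Edge relation of the delegation graph constructed from the (3,B2)-SAT instance with
clauses `C : Fin m → Fin 3 → Fin n × Bool` (clause `j` consists of the three literals
`C j 0, C j 1, C j 2`): edges `(y_j, f(l))` for every literal `l` of clause `C_j`, and
edges `(d_{i,2}, d_{i,1})`, `(d_{i,1}, a_i)`, `(d_{i,1}, ā_i)` for every variable. -/
inductive SatAdj {n m : ℕ} (C : Fin m → Fin 3 → Fin n × Bool) :
    SatVert n m → SatVert n m → Prop
  | clause (j : Fin m) (k : Fin 3) : SatAdj C (.y j) (litVert (C j k))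
  | dd (i : Fin n) : SatAdj C (.d2 i) (.d1 i)
  | dpos (i : Fin n) : SatAdj C (.d1 i) (.pos i)
  | dneg (i : Fin n) : SatAdj C (.d1 i) (.neg i)

/-- The (3,B2) side condition: every literal (each variable with each polarity) appears
in exactly 2 clause positions. -/
def IsB2 {n m : ℕ} (C : Fin m → Fin 3 → Fin n × Bool) : Prop :=
  ∀ (i : Fin n) (b : Bool),
    (Finset.univ.filter (fun p : Fin m × Fin 3 => C p.1 p.2 = (i, b))).card = 2

/-!
Choose a true literal in every clause and let each clause vertex `y_j` delegate to it, let
`d_{i,2}` delegate to `d_{i,1}`, and let `d_{i,1}` delegate to the *false* literal of `x_i`.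
Every path has length at most 2, so there is no cycle. A true literal is reached only from
clause vertices choosing it, and the (3,B2) condition allows at most two of them; a false
literal is chosen by no clause, so it is reached only from `d_{i,1}` and `d_{i,2}`.
-/

theorem Relation.not_transGen_self_of_rank_lt {α : Type*} {r : α → α → Prop} (rank : α → ℕ)
    (h : ∀ a b, r a b → rank b < rank a) (a : α) : ¬ Relation.TransGen r a a :=
  fun ha => lt_irrefl _ (Relation.transGen_eq_self (r := fun x y : ℕ => x > y) ▸ ha.lift rank h)

theorem Relation.ReflTransGen.apply_eq_of_forall {α β : Type*} {r : α → α → Prop} {a b : α}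
    (f : α → β) (hf : ∀ a b, r a b → f a = f b) (h : Relation.ReflTransGen r a b) :
    f a = f b :=
  Relation.reflTransGen_eq_self (r := @Eq β) ▸ h.lift f hf

theorem Option.ncard_setOf_eq_some {α : Type*} {o : Option α} (h : o.isSome) :
    {a | o = some a}.ncard = 1 := by
  obtain ⟨a, rfl⟩ := Option.isSome_iff_exists.mp h
  simp

namespace SatVert

variable {n m : ℕ}

theorem litVert_injective : Function.Injective (litVert : Fin n × Bool → SatVert n m) := by
  rintro ⟨i, b⟩ ⟨i', b'⟩ h
  cases b <;> cases b' <;> simp_all [litVert]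

theorem exists_litVert_of_isSink {C : Fin m → Fin 3 → Fin n × Bool} {v : SatVert n m}
    (hv : IsSink (SatAdj C) v) : ∃ p, v = litVert p := by
  cases v with
  | pos i => exact ⟨(i, true), rfl⟩
  | neg i => exact ⟨(i, false), rfl⟩
  | d1 i => exact absurd (.dpos i) (hv _)
  | d2 i => exact absurd (.dd i) (hv _)
  | y j => exact absurd (.clause j 0) (hv _)

def height : SatVert n m → ℕ
  | .pos _ | .neg _ => 0
  | .d1 _ | .y _ => 1
  | .d2 _ => 2

theorem height_litVert (p : Fin n × Bool) : (litVert p : SatVert n m).height = 0 := by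
  obtain ⟨i, _ | _⟩ := p <;> rfl

variable (C : Fin m → Fin 3 → Fin n × Bool) (g : Fin n → Bool) (ch : Fin m → Fin 3)

/-- The delegation of the feasible solution built from the assignment `g`, where clause `j`
is satisfied by its literal `ch j`. -/
def delegate : SatVert n m → Option (SatVert n m)
  | .pos _ | .neg _ => none
  | .d1 i => some (litVert (i, !g i))
  | .d2 i => some (.d1 i)
  | .y j => some (litVert (C j (ch j)))

/-- The sink at the end of the delegation path starting at a vertex. -/
def representative : SatVert n m → SatVert n m
  | .pos i => .pos i
  | .neg i => .neg i
  | .d1 i | .d2 i => litVert (i, !g i)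
  | .y j => litVert (C j (ch j))

variable {C g ch}

theorem satAdj_of_delegate {u v : SatVert n m} (h : delegate C g ch u = some v) :
    SatAdj C u v := by
  cases u <;> simp only [delegate, reduceCtorEq, Option.some.injEq] at h <;> subst h
  · cases g ‹_› <;> constructor
  · constructor
  · constructor

theorem height_lt_of_delegate {u v : SatVert n m} (h : delegate C g ch u = some v) :
    v.height < u.height := by
  cases u <;> simp only [delegate, reduceCtorEq, Option.some.injEq] at h <;> subst h <;>
    first | rw [height_litVert]; exact Nat.one_pos | exact Nat.one_lt_two

theorem isSome_delegate_of_not_isSink {v : SatVert n m} (hv : ¬ IsSink (SatAdj C) v) :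
    (delegate C g ch v).isSome := by
  cases v with
  | pos | neg => exact absurd (fun _ h => by cases h) hv
  | d1 | d2 | y => rfl

theorem representative_litVert (p : Fin n × Bool) :
    representative C g ch (litVert p) = litVert p := by
  obtain ⟨i, _ | _⟩ := p <;> rfl

theorem representative_eq_of_delegate {u v : SatVert n m} (h : delegate C g ch u = some v) :
    representative C g ch u = representative C g ch v := by
  cases u <;> simp only [delegate, reduceCtorEq, Option.some.injEq] at h <;> subst h <;>
    first | rfl | exact (representative_litVert _).symm

theorem ncard_setOf_representative_eq_le_three (hB2 : IsB2 C)
    (hch : ∀ j, g (C j (ch j)).1 = (C j (ch j)).2) (i : Fin n) (b : Bool) :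
    {v | representative C g ch v = litVert (i, b)}.ncard ≤ 3 := by
  set occurrences := Finset.univ.filter (fun p : Fin m × Fin 3 => C p.1 p.2 = (i, b))
  set others : Finset (SatVert n m) :=
    if g i = b then occurrences.image (fun p => .y p.1) else {.d1 i, .d2 i}
  have h_others : others.card ≤ 2 := by
    unfold others
    split_ifs
    · exact Finset.card_image_le.trans (hB2 i b).le
    · exact Finset.card_le_two
  have h_sub : {v | representative C g ch v = litVert (i, b)} ⊆
      ↑(insert (litVert (i, b)) others) := by
    intro v hv
    cases v with
    | pos | neg => exact Finset.mem_coe.2 (Finset.mem_insert.2 (Or.inl hv))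
    | d1 | d2 =>
      obtain ⟨rfl, rfl⟩ := Prod.ext_iff.mp (litVert_injective hv)
      simp [others]
    | y j =>
      have h_lit : C j (ch j) = (i, b) := litVert_injective hv
      have h_true : g i = b := by simpa [h_lit] using hch j
      simp only [others, h_true, if_true, Finset.coe_insert, Finset.coe_image,
        Set.mem_insert_iff, Set.mem_image]
      exact Or.inr ⟨(j, ch j), by simpa [occurrences] using h_lit, rfl⟩
  calc _ ≤ (insert (litVert (i, b)) others).card := by
        rw [← Set.ncard_coe_finset]
        exact Set.ncard_le_ncard h_sub (Finset.finite_toSet _)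
    _ ≤ others.card + 1 := Finset.card_insert_le _ _
    _ ≤ 3 := by omega

end SatVert

/-- if the (3,B2)-SAT instance has a satisfying assignment, then `(G, 3)` is
a yes-instance of Resolve Delegation (an assignment `g` satisfies clause `j` iff some
literal `C j k` of the clause evaluates to true, i.e. `g (C j k).1 = (C j k).2`). -/
theorem stmt_2 {n m : ℕ} (C : Fin m → Fin 3 → Fin n × Bool)
    (hB2 : IsB2 C)
    (g : Fin n → Bool) (hg : ∀ j : Fin m, ∃ k : Fin 3, g (C j k).1 = (C j k).2) :
    YesInstance (SatAdj C) 3 := by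
  choose ch hch using hg
  refine ⟨fun u v => SatVert.delegate C g ch u = some v,
    fun _ _ => SatVert.satAdj_of_delegate,
    Relation.not_transGen_self_of_rank_lt SatVert.height
      (fun _ _ => SatVert.height_lt_of_delegate),
    fun _ hv => Option.ncard_setOf_eq_some (SatVert.isSome_delegate_of_not_isSink hv), ?_⟩
  intro t ht
  obtain ⟨⟨i, b⟩, rfl⟩ := SatVert.exists_litVert_of_isSink ht
  refine le_trans (Set.ncard_le_ncard ?_ (Set.toFinite _))
    (SatVert.ncard_setOf_representative_eq_le_three hB2 hch i b)
  intro v hv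
  rw [Set.mem_ofPred_eq,
    hv.apply_eq_of_forall _ (fun _ _ => SatVert.representative_eq_of_delegate),
    SatVert.representative_litVert]
end

section
/- Let φ be a (3,B2)-SAT instance with variables x_1,…,x_n and clauses C_1,…,C_m, and let G be the delegation graph constructed from φ as described. If (G, 3) is a yes-instance of Resolve Delegation, then φ has a satisfying Boolean assignment. -/
/-!
In a feasible solution, `d_{i,2}` must delegate to `d_{i,1}`, which delegates to one of
`a_i`, `ā_i`; that sink then already collects three votes (itself, `d_{i,1}`, `d_{i,2}`),
so with `λ = 3` no clause vertex can delegate to it. Setting every variable so that the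
literal chosen by `d_{i,1}` is false, each clause vertex `y_j` delegates to a true literal
of `C_j`.
-/

namespace FeasibleSolution

variable {V : Type} {E H : V → V → Prop} {lam : ℕ}

theorem existsUnique_succ (hF : FeasibleSolution E H lam) {v : V} (hv : ¬ IsSink E v) :
    ∃! u, H v u := by
  obtain ⟨u, hu⟩ := Set.ncard_eq_one.mp (hF.2.2.1 v hv)
  exact ⟨u, hu.ge rfl, fun w hw => hu.le hw⟩

theorem card_le_of_forall_reflTransGen [Finite V] (hF : FeasibleSolution E H lam) {t : V}
    (ht : IsSink E t) {s : Finset V} (hs : ∀ v ∈ s, Relation.ReflTransGen H v t) :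
    s.card ≤ lam := by
  rw [← Set.ncard_coe_finset]
  exact (Set.ncard_le_ncard hs (Set.toFinite _)).trans (hF.2.2.2 t ht)

end FeasibleSolution

namespace SatAdj

variable {n m : ℕ} {C : Fin m → Fin 3 → Fin n × Bool} {H : SatVert n m → SatVert n m → Prop}
  {lam : ℕ}

theorem isSink_litVert (l : Fin n × Bool) : IsSink (SatAdj C) (litVert l) := by
  obtain ⟨i, _ | _⟩ := l <;> rintro u ⟨⟩

theorem d2_to_d1 (hF : FeasibleSolution (SatAdj C) H lam) (i : Fin n) :
    H (.d2 i) (.d1 i) := by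
  obtain ⟨u, hu, -⟩ := hF.existsUnique_succ fun h => h _ (SatAdj.dd i)
  cases hF.1 _ _ hu
  exact hu

theorem d1_to_pos_iff (hF : FeasibleSolution (SatAdj C) H lam) (i : Fin n) :
    H (.d1 i) (.pos i) ↔ ¬ H (.d1 i) (.neg i) := by
  obtain ⟨u, hu, huniq⟩ := hF.existsUnique_succ fun h => h _ (SatAdj.dpos i)
  have hpn : SatVert.pos i ≠ (SatVert.neg i : SatVert n m) := by simp
  cases hF.1 _ _ hu with
  | dpos => exact ⟨fun _ h => hpn (huniq _ h).symm, fun _ => hu⟩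
  | dneg => exact ⟨fun h => absurd (huniq _ h) hpn, fun h => absurd hu h⟩

theorem exists_y_to_litVert (hF : FeasibleSolution (SatAdj C) H lam) (j : Fin m) :
    ∃ k, H (.y j) (litVert (C j k)) := by
  obtain ⟨u, hu, -⟩ := hF.existsUnique_succ fun h => h _ (SatAdj.clause j 0)
  cases hF.1 _ _ hu with
  | clause _ k => exact ⟨k, hu⟩

theorem not_y_to_litVert_of_d1_to_litVert (hF : FeasibleSolution (SatAdj C) H 3)
    {i : Fin n} {b : Bool} (hd : H (.d1 i) (litVert (i, b))) (j : Fin m) :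
    ¬ H (.y j) (litVert (i, b)) := by
  intro hy
  have hfour : ({.y j, .d1 i, .d2 i, litVert (i, b)} : Finset (SatVert n m)).card = 4 := by
    cases b <;> simp [litVert]
  have hreach : ∀ v ∈ ({.y j, .d1 i, .d2 i, litVert (i, b)} : Finset (SatVert n m)),
      Relation.ReflTransGen H v (litVert (i, b)) := by
    simp only [Finset.mem_insert, Finset.mem_singleton]
    rintro v (rfl | rfl | rfl | rfl)
    · exact .single hy
    · exact .single hd
    · exact .head (d2_to_d1 hF i) (.single hd)
    · exact .refl
  have := hF.card_le_of_forall_reflTransGen (isSink_litVert _) hreach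
  omega

open Classical in
noncomputable def assignment (H : SatVert n m → SatVert n m → Prop) : Fin n → Bool :=
  fun i => decide (¬ H (.d1 i) (.pos i))

theorem assignment_eq_iff (hF : FeasibleSolution (SatAdj C) H lam) (i : Fin n) (b : Bool) :
    assignment H i = b ↔ ¬ H (.d1 i) (litVert (i, b)) := by
  cases b
  · simp [assignment, litVert, d1_to_pos_iff hF i]
  · simp [assignment, litVert]

end SatAdj

theorem stmt_3_general {n m : ℕ} (C : Fin m → Fin 3 → Fin n × Bool)
    (hyes : YesInstance (SatAdj C) 3) :
    ∃ g : Fin n → Bool, ∀ j : Fin m, ∃ k : Fin 3, g (C j k).1 = (C j k).2 := by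
  obtain ⟨H, hF⟩ := hyes
  refine ⟨SatAdj.assignment H, fun j => ?_⟩
  obtain ⟨k, hk⟩ := SatAdj.exists_y_to_litVert hF j
  refine ⟨k, (SatAdj.assignment_eq_iff hF _ _).mpr fun hd => ?_⟩
  exact SatAdj.not_y_to_litVert_of_d1_to_litVert hF hd j hk

/-- if `(G, 3)` is a yes-instance of Resolve Delegation, then the
(3,B2)-SAT instance has a satisfying assignment. -/
theorem stmt_3 {n m : ℕ} (C : Fin m → Fin 3 → Fin n × Bool)
    (hB2 : IsB2 C)
    (hyes : YesInstance (SatAdj C) 3) :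
    ∃ g : Fin n → Bool, ∀ j : Fin m, ∃ k : Fin 3, g (C j k).1 = (C j k).2 :=
  stmt_3_general C hyes
end

section
/- Let G=(V,E) be a finite undirected graph with edge weights w : E → ℕ≥1, let r be a positive integer, and let H be the delegation graph constructed from (G, w) as described. If there exists an orientation Λ of G such that the weighted out-degree of every vertex of G under Λ is at most r, then (H, r+1) is a yes-instance of Resolve Delegation. -/
/-- Vertex set of the delegation graph `H` constructed from the undirected graph `G`
with edge weights `w`: the sink vertices `b_u` for `u ∈ V(G)` (the left summand)
together with, for each edge `e` of `G`, the path vertices `a_{e,1}, …, a_{e,w(e)}`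
(`a_{e,k}` is represented by the `Fin (w e)` element with value `k - 1`). -/
abbrev MMOVert {V : Type} [Fintype V] [DecidableEq V] (G : SimpleGraph V)
    [DecidableRel G.Adj] (w : Sym2 V → ℕ) : Type :=
  V ⊕ (Σ e : G.edgeSet, Fin (w e))

/-- Edge relation of the delegation graph `H` constructed from `(G, w)`: for every edge
`e = {u, v}` of `G`, the edges `(a_{e,1}, b_u)` and `(a_{e,1}, b_v)`, and the edges
`(a_{e,i}, a_{e,i-1})` for `2 ≤ i ≤ w(e)`. -/
inductive MMOAdj {V : Type} [Fintype V] [DecidableEq V] (G : SimpleGraph V)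
    [DecidableRel G.Adj] (w : Sym2 V → ℕ) :
    MMOVert G w → MMOVert G w → Prop
  | toSink (e : G.edgeSet) (i : Fin (w e)) (u : V) (hu : u ∈ (e : Sym2 V))
      (hi : (i : ℕ) = 0) :
      MMOAdj G w (Sum.inr ⟨e, i⟩) (Sum.inl u)
  | step (e : G.edgeSet) (i j : Fin (w e)) (hij : (i : ℕ) = (j : ℕ) + 1) :
      MMOAdj G w (Sum.inr ⟨e, i⟩) (Sum.inr ⟨e, j⟩)

/-- `Λ` is an orientation of the undirected graph `G`: it only orients edges of `G`,
and each edge of `G` gets exactly one of its two possible directions. -/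
def IsOrientation {V : Type} (G : SimpleGraph V) (Λ : V → V → Bool) : Prop :=
  (∀ u v, Λ u v = true → G.Adj u v) ∧
  (∀ u v, G.Adj u v → (Λ u v = !(Λ v u)))

/-- The weighted out-degree of `v` under the orientation `Λ` with edge weights `w`. -/
def wOutDeg {V : Type} [Fintype V] (w : Sym2 V → ℕ) (Λ : V → V → Bool) (v : V) : ℕ :=
  ∑ u : V, if Λ v u then w s(v, u) else 0


/-!
Orient every edge `e` of `G` and let the chain `a_{e,w(e)} → ⋯ → a_{e,1}` delegate to the
tail of `e`. The result is acyclic, every non-sink delegates exactly once, and the vertices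
reaching the sink `b_u` are `b_u` itself and the chains of the edges with tail `u`; there are
`1 + ∑_{tail e = u} w(e) ≤ 1 + r` of them, the sum being part of the weighted out-degree of `u`.
-/

namespace MMODelegation

open Function

variable {V : Type} [Fintype V] [DecidableEq V] {G : SimpleGraph V} [DecidableRel G.Adj]
  {w : Sym2 V → ℕ}

def chainNext (tail : G.edgeSet → V) : (Σ e : G.edgeSet, Fin (w e)) → MMOVert G w
  | ⟨e, ⟨0, _⟩⟩ => .inl (tail e)
  | ⟨e, ⟨k + 1, _⟩⟩ => .inr ⟨e, ⟨k, by omega⟩⟩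

def chainDelegation (tail : G.edgeSet → V) (x y : MMOVert G w) : Prop :=
  ∃ p, x = .inr p ∧ y = chainNext tail p

theorem mmoAdj_chainNext {tail : G.edgeSet → V}
    (htail : ∀ e : G.edgeSet, tail e ∈ (e : Sym2 V))
    (p : Σ e : G.edgeSet, Fin (w e)) : MMOAdj G w (.inr p) (chainNext tail p) := by
  obtain ⟨e, ⟨_ | _, _⟩⟩ := p
  · exact .toSink e _ _ (htail e) rfl
  · exact .step e _ _ rfl

theorem isSink_mmoAdj_iff {x : MMOVert G w} : IsSink (MMOAdj G w) x ↔ x.isLeft := by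
  constructor
  · intro hx
    obtain _ | p := x
    · rfl
    · exact (hx _ (mmoAdj_chainNext (fun e => Sym2.out_fst_mem (e : Sym2 V)) p)).elim
  · rintro hx y hxy
    cases hxy <;> simp at hx

theorem chainDelegation_le_mmoAdj {tail : G.edgeSet → V}
    (htail : ∀ e : G.edgeSet, tail e ∈ (e : Sym2 V)) :
    chainDelegation (w := w) tail ≤ MMOAdj G w := by
  rintro _ _ ⟨p, rfl, rfl⟩
  exact mmoAdj_chainNext htail p

theorem ncard_chainDelegation_inr (tail : G.edgeSet → V) (p : Σ e : G.edgeSet, Fin (w e)) :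
    {y | chainDelegation tail (.inr p) y}.ncard = 1 := by
  have : {y | chainDelegation tail (.inr p) y} = {chainNext tail p} := by
    ext y
    simp [chainDelegation]
  rw [this, Set.ncard_singleton]

def chainRank : MMOVert G w → ℕ
  | .inl _ => 0
  | .inr ⟨_, i⟩ => i + 1

theorem chainRank_chainNext_lt (tail : G.edgeSet → V) (p : Σ e : G.edgeSet, Fin (w e)) :
    chainRank (chainNext tail p) < chainRank (.inr p) := by
  obtain ⟨e, ⟨_ | _, _⟩⟩ := p <;> simp [chainNext, chainRank]

theorem chainDelegation_acyclic (tail : G.edgeSet → V) (x : MMOVert G w) :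
    ¬ Relation.TransGen (chainDelegation tail) x x := by
  intro hx
  have hdesc : chainDelegation (w := w) tail ≤ ((· > ·) on chainRank) := by
    rintro _ _ ⟨p, rfl, rfl⟩
    exact chainRank_chainNext_lt tail p
  have := hx.lift chainRank hdesc
  rw [Relation.transGen_eq_self] at this
  exact lt_irrefl _ this

def chainTarget (tail : G.edgeSet → V) : MMOVert G w → V
  | .inl u => u
  | .inr ⟨e, _⟩ => tail e

theorem chainTarget_eq_of_reflTransGen {tail : G.edgeSet → V} {x y : MMOVert G w}
    (hxy : Relation.ReflTransGen (chainDelegation tail) x y) :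
    chainTarget tail x = chainTarget tail y := by
  have hstep : chainDelegation (w := w) tail ≤ (Eq on chainTarget tail) := by
    rintro _ _ ⟨⟨e, ⟨_ | _, _⟩⟩, rfl, rfl⟩ <;> rfl
  simpa [Relation.reflTransGen_eq_self] using hxy.lift (chainTarget tail) hstep

theorem ncard_chainTarget_eq_le (tail : G.edgeSet → V) (u : V) :
    {x : MMOVert G w | chainTarget tail x = u}.ncard ≤
      1 + ∑ e ∈ Finset.univ.filter (tail · = u), w e := by
  set S := (Finset.univ.filter (tail · = u)).sigma fun e => (Finset.univ : Finset (Fin (w e)))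
  have hsub : {x : MMOVert G w | chainTarget tail x = u} ⊆ insert (.inl u) (.inr '' ↑S) := by
    rintro (v | ⟨e, i⟩) hx
    · exact Or.inl (congrArg Sum.inl hx)
    · refine Or.inr ⟨⟨e, i⟩, ?_, rfl⟩
      exact Finset.mem_sigma.mpr
        ⟨Finset.mem_filter.mpr ⟨Finset.mem_univ _, hx⟩, Finset.mem_univ _⟩
  calc {x : MMOVert G w | chainTarget tail x = u}.ncard
      ≤ (insert (.inl u) (.inr '' ↑S) : Set (MMOVert G w)).ncard :=
        Set.ncard_le_ncard hsub (Set.toFinite _)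
    _ ≤ (.inr '' ↑S : Set (MMOVert G w)).ncard + 1 := Set.ncard_insert_le _ _
    _ = 1 + ∑ e ∈ Finset.univ.filter (tail · = u), w e := by
        rw [Set.ncard_image_of_injective _ Sum.inr_injective, Set.ncard_coe_finset,
          Finset.card_sigma, add_comm]
        simp

theorem feasibleSolution_chainDelegation {tail : G.edgeSet → V}
    (htail : ∀ e : G.edgeSet, tail e ∈ (e : Sym2 V)) {r : ℕ}
    (hload : ∀ u, ∑ e ∈ Finset.univ.filter (tail · = u), w e ≤ r) :
    FeasibleSolution (MMOAdj G w) (chainDelegation tail) (r + 1) := by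
  refine ⟨chainDelegation_le_mmoAdj htail, chainDelegation_acyclic tail, ?_, ?_⟩
  · rintro (_ | p) hx
    · exact (hx (isSink_mmoAdj_iff.mpr rfl)).elim
    · exact ncard_chainDelegation_inr tail p
  · rintro (u | _) ht
    · calc {x | Relation.ReflTransGen (chainDelegation tail) x (.inl u)}.ncard
          ≤ {x : MMOVert G w | chainTarget tail x = u}.ncard :=
            Set.ncard_le_ncard (fun x hx => chainTarget_eq_of_reflTransGen hx) (Set.toFinite _)
        _ ≤ 1 + r := (ncard_chainTarget_eq_le tail u).trans (Nat.add_le_add_left (hload u) 1)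
        _ = r + 1 := add_comm 1 r
    · simp [isSink_mmoAdj_iff] at ht

end MMODelegation

theorem IsOrientation.exists_tail_head {V : Type} {G : SimpleGraph V} {Λ : V → V → Bool}
    (hΛ : IsOrientation G Λ) (e : G.edgeSet) :
    ∃ u v, (e : Sym2 V) = s(u, v) ∧ Λ u v = true := by
  obtain ⟨e, he⟩ := e
  induction e using Sym2.inductionOn with
  | hf a b =>
    cases hba : Λ b a
    · exact ⟨a, b, rfl, by simpa [hba] using hΛ.2 a b he⟩
    · exact ⟨b, a, Sym2.eq_swap, hba⟩

theorem sum_weight_tail_eq_le_wOutDeg {V : Type} [Fintype V] [DecidableEq V] {G : SimpleGraph V}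
    [Fintype G.edgeSet] (w : Sym2 V → ℕ) {Λ : V → V → Bool} {tail head : G.edgeSet → V}
    (hedge : ∀ e : G.edgeSet, (e : Sym2 V) = s(tail e, head e))
    (horient : ∀ e, Λ (tail e) (head e) = true)
    (u : V) : ∑ e ∈ Finset.univ.filter (tail · = u), w e ≤ wOutDeg w Λ u := by
  set F := Finset.univ.filter (tail · = u)
  have hF : ∀ e ∈ F, (e : Sym2 V) = s(u, head e) := fun e he => by
    rw [hedge e, (Finset.mem_filter.mp he).2]
  have hinj : Set.InjOn head F := fun e he e' he' h =>
    Subtype.ext (by rw [hF e he, hF e' he', h])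
  calc ∑ e ∈ F, w e = ∑ v ∈ F.image head, if Λ u v then w s(u, v) else 0 := by
        rw [Finset.sum_image hinj]
        refine Finset.sum_congr rfl fun e he => ?_
        rw [← hF e he, ← (Finset.mem_filter.mp he).2, if_pos (horient e)]
    _ ≤ wOutDeg w Λ u := Finset.sum_le_sum_of_subset (Finset.subset_univ _)

theorem stmt_6_general {V : Type} [Fintype V] [DecidableEq V]
    (G : SimpleGraph V) [DecidableRel G.Adj]
    (w : Sym2 V → ℕ)
    (r : ℕ)
    (Λ : V → V → Bool) (hΛ : IsOrientation G Λ)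
    (hout : ∀ v : V, wOutDeg w Λ v ≤ r) :
    YesInstance (MMOAdj G w) (r + 1) := by
  choose tail head hedge horient using hΛ.exists_tail_head
  have htail : ∀ e : G.edgeSet, tail e ∈ (e : Sym2 V) := fun e =>
    hedge e ▸ Sym2.mem_mk_left _ _
  exact ⟨_, MMODelegation.feasibleSolution_chainDelegation htail fun u =>
    (sum_weight_tail_eq_le_wOutDeg w hedge horient u).trans (hout u)⟩

/-- if there is an orientation of `G` under which every vertex has weighted
out-degree at most `r`, then `(H, r + 1)` is a yes-instance of Resolve Delegation. -/
theorem stmt_6 {V : Type} [Fintype V] [DecidableEq V]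
    (G : SimpleGraph V) [DecidableRel G.Adj]
    (w : Sym2 V → ℕ) (hw : ∀ e ∈ G.edgeSet, 1 ≤ w e)
    (r : ℕ) (hr : 1 ≤ r)
    (Λ : V → V → Bool) (hΛ : IsOrientation G Λ)
    (hout : ∀ v : V, wOutDeg w Λ v ≤ r) :
    YesInstance (MMOAdj G w) (r + 1) :=
  stmt_6_general G w r Λ hΛ hout
end

section
/- Let G=(V,E) be a finite undirected graph with edge weights w : E → ℕ≥1, let r be a positive integer, and let H be the delegation graph constructed from (G, w) as described. If (H, r+1) is a yes-instance of Resolve Delegation, then there exists an orientation Λ of G such that the weighted out-degree of every vertex of G under Λ is at most r. -/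
/-!
In a feasible solution every path vertex `a_{e,i}` with `i ≥ 2` can only delegate to
`a_{e,i-1}`, so the whole path of `e` delegates to the sink `b_u` chosen by `a_{e,1}`, where
`u` is an endpoint of `e`. Orient `e` away from `u`. Then for each vertex `v`, the sink `b_v`
is reached by itself and by the `w(e)` path vertices of every edge `e` oriented away from `v`,
so `1 + (weighted out-degree of v) ≤ r + 1`.
-/

open Relation Finset

section Orientation

variable {V : Type} [DecidableEq V] {G : SimpleGraph V} [DecidableRel G.Adj]
  {tail : G.edgeSet → V}

variable (G) in
def orientationOfTail (tail : G.edgeSet → V) : V → V → Bool :=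
  fun a b => if h : G.Adj a b then decide (tail ⟨s(a, b), h⟩ = a) else false

theorem orientationOfTail_eq_true_iff {a b : V} :
    orientationOfTail G tail a b = true ↔ ∃ h : G.Adj a b, tail ⟨s(a, b), h⟩ = a := by
  unfold orientationOfTail
  split_ifs with h <;> simp [h]

theorem isOrientation_orientationOfTail (htail : ∀ e : G.edgeSet, tail e ∈ (e : Sym2 V)) :
    IsOrientation G (orientationOfTail G tail) := by
  refine ⟨fun a b hab => (orientationOfTail_eq_true_iff.mp hab).1, fun a b hab => ?_⟩
  have hswap : (⟨s(b, a), hab.symm⟩ : G.edgeSet) = ⟨s(a, b), hab⟩ := Subtype.ext Sym2.eq_swap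
  simp only [orientationOfTail, dif_pos hab, dif_pos hab.symm, hswap]
  rcases Sym2.mem_iff.mp (htail ⟨s(a, b), hab⟩) with h | h <;> simp [h, hab.ne, hab.ne.symm]

theorem wOutDeg_orientationOfTail [Fintype V] (w : Sym2 V → ℕ)
    (htail : ∀ e : G.edgeSet, tail e ∈ (e : Sym2 V)) (v : V) :
    wOutDeg w (orientationOfTail G tail) v = ∑ e with tail e = v, w e := by
  rw [wOutDeg, ← Finset.sum_filter]
  refine Finset.sum_bij
    (fun u hu => ⟨s(v, u), (orientationOfTail_eq_true_iff.mp (mem_filter.mp hu).2).1⟩)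
    (fun u hu => ?_) (fun u₁ _ u₂ _ h => ?_) (fun e he => ?_) (fun _ _ => rfl)
  · obtain ⟨_, h⟩ := orientationOfTail_eq_true_iff.mp (mem_filter.mp hu).2
    simpa using h
  · exact Sym2.congr_right.mp (congrArg Subtype.val h)
  · have hv : v ∈ (e : Sym2 V) := (mem_filter.mp he).2 ▸ htail e
    have hadj : G.Adj v (Sym2.Mem.other hv) := by
      rw [← SimpleGraph.mem_edgeSet, Sym2.other_spec]
      exact e.2
    have he' : (⟨s(v, Sym2.Mem.other hv), hadj⟩ : G.edgeSet) = e :=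
      Subtype.ext (Sym2.other_spec hv)
    refine ⟨_, mem_filter.mpr ⟨mem_univ _, orientationOfTail_eq_true_iff.mpr ⟨hadj, ?_⟩⟩, he'⟩
    rw [he']
    exact (mem_filter.mp he).2

end Orientation

theorem FeasibleSolution.exists_adj_of_not_isSink {α : Type} {E H : α → α → Prop} {lam : ℕ}
    (hH : FeasibleSolution E H lam) {v : α} (hv : ¬ IsSink E v) : ∃ u, H v u ∧ E v u := by
  obtain ⟨u, hu⟩ := Set.nonempty_of_ncard_ne_zero (hH.2.2.1 v hv ▸ one_ne_zero)
  exact ⟨u, hu, hH.1 v u hu⟩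

section Delegation

variable {V : Type} [Fintype V] [DecidableEq V] {G : SimpleGraph V} [DecidableRel G.Adj]
  {w : Sym2 V → ℕ} {H : MMOVert G w → MMOVert G w → Prop} {lam : ℕ}

theorem mmoAdj_isSink_inl (u : V) : IsSink (MMOAdj G w) (.inl u) :=
  fun _ h => nomatch h

theorem mmoAdj_not_isSink_inr (e : G.edgeSet) (i : Fin (w e)) :
    ¬ IsSink (MMOAdj G w) (.inr ⟨e, i⟩) := by
  intro hsink
  rcases Nat.eq_zero_or_pos i with hi | hi
  · exact hsink _ (.toSink e i _ (Sym2.out_fst_mem _) hi)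
  · exact hsink _ (.step e i ⟨i - 1, by omega⟩ (by simp only; omega))

theorem FeasibleSolution.reflTransGen_inr_of_val_eq_zero
    (hH : FeasibleSolution (MMOAdj G w) H lam) (e : G.edgeSet) (i j : Fin (w e))
    (hj : (j : ℕ) = 0) : ReflTransGen H (.inr ⟨e, i⟩) (.inr ⟨e, j⟩) := by
  obtain ⟨n, hn⟩ := i
  induction n with
  | zero => rw [show j = ⟨0, hn⟩ from Fin.ext hj]
  | succ n ih =>
    obtain ⟨x, hx, hadj⟩ := hH.exists_adj_of_not_isSink (mmoAdj_not_isSink_inr e ⟨n + 1, hn⟩)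
    cases hadj with
    | toSink _ _ _ _ h => simp at h
    | step _ _ k hk =>
      obtain ⟨k, hk'⟩ := k
      obtain rfl : k = n := by simp only at hk; omega
      exact .head hx (ih _)

theorem FeasibleSolution.exists_tail (hH : FeasibleSolution (MMOAdj G w) H lam)
    (hw : ∀ e ∈ G.edgeSet, 1 ≤ w e) :
    ∃ tail : G.edgeSet → V, (∀ e : G.edgeSet, tail e ∈ (e : Sym2 V)) ∧
      ∀ e i, ReflTransGen H (.inr ⟨e, i⟩) (.inl (tail e)) := by
  have hfirst : ∀ e : G.edgeSet, ∃ u ∈ (e : Sym2 V), H (.inr ⟨e, ⟨0, hw e e.2⟩⟩) (.inl u) := by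
    intro e
    obtain ⟨x, hx, hadj⟩ := hH.exists_adj_of_not_isSink (mmoAdj_not_isSink_inr e ⟨0, hw e e.2⟩)
    cases hadj with
    | toSink _ _ u hu _ => exact ⟨u, hu, hx⟩
    | step _ _ _ h => simp at h
  choose tail htail_mem htail_adj using hfirst
  exact ⟨tail, htail_mem, fun e i =>
    (hH.reflTransGen_inr_of_val_eq_zero e i _ rfl).tail (htail_adj e)⟩

theorem wOutDeg_orientationOfTail_lt_ncard {tail : G.edgeSet → V}
    (htail : ∀ e : G.edgeSet, tail e ∈ (e : Sym2 V)) {v : V} {S : Set (MMOVert G w)}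
    (hv : .inl v ∈ S) (hS : ∀ e, tail e = v → ∀ i, .inr ⟨e, i⟩ ∈ S) :
    wOutDeg w (orientationOfTail G tail) v < S.ncard := by
  set T : Finset (Σ e : G.edgeSet, Fin (w e)) := (univ.filter (tail · = v)).sigma fun _ => univ
  have hT : T.card = wOutDeg w (orientationOfTail G tail) v := by
    simp [T, wOutDeg_orientationOfTail w htail]
  have hsub : ↑(insert (.inl v) (T.map .inr) : Finset (MMOVert G w)) ⊆ S := by
    intro x hx
    simp only [coe_insert, coe_map, Set.mem_insert_iff, Set.mem_image, T, coe_sigma,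
      Set.mem_sigma_iff, coe_filter] at hx
    rcases hx with rfl | ⟨⟨e, i⟩, ⟨⟨-, he⟩, -⟩, rfl⟩
    · exact hv
    · exact hS e he i
  have hcard := Set.ncard_le_ncard hsub (Set.toFinite S)
  rw [Set.ncard_coe_finset, card_insert_of_notMem (by simp), card_map, hT] at hcard
  omega

end Delegation

theorem stmt_7_general {V : Type} [Fintype V] [DecidableEq V]
    (G : SimpleGraph V) [DecidableRel G.Adj]
    (w : Sym2 V → ℕ) (hw : ∀ e ∈ G.edgeSet, 1 ≤ w e)
    (r : ℕ)
    (hyes : YesInstance (MMOAdj G w) (r + 1)) :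
    ∃ Λ : V → V → Bool, IsOrientation G Λ ∧ ∀ v : V, wOutDeg w Λ v ≤ r := by
  obtain ⟨H, hH⟩ := hyes
  obtain ⟨tail, htail_mem, htail_reach⟩ := hH.exists_tail hw
  refine ⟨orientationOfTail G tail, isOrientation_orientationOfTail htail_mem, fun v => ?_⟩
  have hlt := wOutDeg_orientationOfTail_lt_ncard (S := {x | ReflTransGen H x (.inl v)})
    htail_mem .refl fun e he i => he ▸ htail_reach e i
  have hle := hH.2.2.2 (.inl v) (mmoAdj_isSink_inl v)
  omega

/-- if `(H, r + 1)` is a yes-instance of Resolve Delegation, then there is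
an orientation of `G` under which every vertex has weighted out-degree at most `r`. -/
theorem stmt_7 {V : Type} [Fintype V] [DecidableEq V]
    (G : SimpleGraph V) [DecidableRel G.Adj]
    (w : Sym2 V → ℕ) (hw : ∀ e ∈ G.edgeSet, 1 ≤ w e)
    (r : ℕ) (hr : 1 ≤ r)
    (hyes : YesInstance (MMOAdj G w) (r + 1)) :
    ∃ Λ : V → V → Bool, IsOrientation G Λ ∧ ∀ v : V, wOutDeg w Λ v ≤ r :=
  stmt_7_general G w hw r hyes
end

section
/- Let G=(V,E) be a delegation graph with sink set T, let k = |V∖T|, and let λ ≥ 2 be an integer. Suppose v ∈ V∖T has in-degree 0 in G and has at least k out-neighbors belonging to T. Let G−v be the graph obtained from G by deleting v and all its incident edges (its sink set is T). Then (G, λ) is a yes-instance of Resolve Delegation if and only if (G−v, λ) is a yes-instance of Resolve Delegation. -/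
/-!
Deleting `v` keeps a solution feasible, since nothing points to `v`. Conversely, in a solution
for `G - v` every vertex reaches exactly one sink. Sending each sink out-neighbour of `v` that is
reached from another vertex to such a vertex is therefore injective, with values among the `k - 1`
non-sinks other than `v`. As `v` has at least `k` sink out-neighbours, one of them, `t`, is reached
only from itself; delegating `v` to `t` gives a solution for `G` in which `t` collects
`2 ≤ λ` vertices and every other count is unchanged.
-/

open Relation

theorem Relation.ReflTransGen.eq_of_forall_not_rel {α : Type*} {r : α → α → Prop} {a b : α}
    (ha : ∀ c, ¬ r a c) (h : ReflTransGen r a b) : a = b := by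
  rcases h.cases_head with rfl | ⟨c, hac, -⟩
  · rfl
  · exact absurd hac (ha c)

section Subtype

variable {α : Type*} {r : α → α → Prop} {p : α → Prop}

theorem reflTransGen_subtype_iff (hp : ∀ a b, p a → r a b → p b) {a b : Subtype p} :
    ReflTransGen (fun x y : Subtype p => r x y) a b ↔ ReflTransGen r a b := by
  refine ⟨ReflTransGen.lift Subtype.val (fun _ _ h => h) _ _, fun h => ?_⟩
  obtain ⟨a, ha⟩ := a
  change ReflTransGen r a b at h
  induction h using ReflTransGen.head_induction_on with
  | refl => rfl
  | head hac _ ih => exact .head hac (ih (hp _ _ ha hac))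

theorem transGen_subtype_iff (hp : ∀ a b, p a → r a b → p b) {a b : Subtype p} :
    TransGen (fun x y : Subtype p => r x y) a b ↔ TransGen r a b := by
  refine ⟨TransGen.lift Subtype.val (fun _ _ h => h) _ _, fun h => ?_⟩
  obtain ⟨c, hac, hcb⟩ := TransGen.head'_iff.mp h
  exact TransGen.head'_iff.mpr ⟨⟨c, hp _ _ a.2 hac⟩, hac, (reflTransGen_subtype_iff hp).mpr hcb⟩

end Subtype

theorem isSink_subtype_iff {α : Type} {r : α → α → Prop} {p : α → Prop}
    (hp : ∀ a b, p a → r a b → p b) {x : Subtype p} :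
    IsSink (fun a b : Subtype p => r a b) x ↔ IsSink r x :=
  ⟨fun h u hu => h ⟨u, hp _ _ x.2 hu⟩ hu, fun h u => h u⟩

theorem Set.ncard_preimage_val_ne {α : Type*} (S : Set α) (v : α) :
    ((Subtype.val : {x // x ≠ v} → α) ⁻¹' S).ncard = (S \ {v}).ncard := by
  rw [← Set.ncard_preimage_of_injective_subset_range Subtype.val_injective (s := S \ {v})
    fun x hx => ⟨⟨x, hx.2⟩, rfl⟩]
  congr 1
  ext x
  exact ⟨fun h => ⟨h, x.2⟩, And.left⟩

namespace FeasibleSolution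

variable {α : Type} {E H : α → α → Prop} {lam : ℕ}

theorem not_rel_of_isSink (hH : FeasibleSolution E H lam) {t : α} (ht : IsSink E t) (u : α) :
    ¬ H t u :=
  fun h => ht u (hH.1 _ _ h)

theorem rightUnique (hH : FeasibleSolution E H lam) : Relator.RightUnique H := by
  intro a b c hab hac
  obtain ⟨w, hw⟩ := Set.ncard_eq_one.mp (hH.2.2.1 a fun ha => ha b (hH.1 _ _ hab))
  have hb : b ∈ {u | H a u} := hab
  have hc : c ∈ {u | H a u} := hac
  rw [hw] at hb hc
  exact hb.trans hc.symm

theorem eq_of_reflTransGen_isSink (hH : FeasibleSolution E H lam) {u s s' : α}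
    (hs : IsSink E s) (hs' : IsSink E s') (h : ReflTransGen H u s) (h' : ReflTransGen H u s') :
    s = s' := by
  rcases ReflTransGen.total_of_right_unique hH.rightUnique h h' with h | h
  · exact h.eq_of_forall_not_rel (hH.not_rel_of_isSink hs)
  · exact (h.eq_of_forall_not_rel (hH.not_rel_of_isSink hs')).symm

theorem exists_isolated_sink [Finite α] (hH : FeasibleSolution E H lam) {S : Set α}
    (hS : ∀ t ∈ S, IsSink E t) (hcard : {x | ¬ IsSink E x}.ncard < S.ncard) :
    ∃ t ∈ S, ∀ u, ReflTransGen H u t → u = t := by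
  by_contra! hne
  choose! f hf using hne
  have hmaps : ∀ t ∈ S, f t ∈ {x | ¬ IsSink E x} := fun t ht hsink =>
    (hf t ht).2 ((hf t ht).1.eq_of_forall_not_rel (hH.not_rel_of_isSink hsink))
  have hinj : Set.InjOn f S := fun t ht t' ht' heq =>
    hH.eq_of_reflTransGen_isSink (hS t ht) (hS t' ht') (hf t ht).1 (heq ▸ (hf t' ht').1)
  exact (Set.ncard_le_ncard_of_injOn f hmaps hinj).not_gt hcard

theorem restrict [Finite α] {p : α → Prop} (hH : FeasibleSolution E H lam)
    (hp : ∀ a b, p a → E a b → p b) :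
    FeasibleSolution (fun a b : Subtype p => E a b) (fun a b => H a b) lam := by
  obtain ⟨hsub, hacyc, hout, hcnt⟩ := hH
  refine ⟨fun a b h => hsub a b h, fun x hx => ?_, fun x hx => ?_, fun t ht => ?_⟩
  · exact hacyc x (TransGen.lift Subtype.val (fun _ _ h => h) _ _ hx)
  · rw [isSink_subtype_iff hp] at hx
    rw [← hout x hx]
    exact Set.ncard_preimage_of_injective_subset_range Subtype.val_injective
      fun u hu => ⟨⟨u, hp _ _ x.2 (hsub _ _ hu)⟩, rfl⟩
  · calc _ ≤ {u | ReflTransGen H u t}.ncard :=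
          Set.ncard_le_ncard_of_injOn Subtype.val
            (fun u hu => ReflTransGen.lift Subtype.val (fun _ _ h => h) _ _ hu)
            Subtype.val_injective.injOn
      _ ≤ lam := hcnt t ((isSink_subtype_iff hp).mp ht)

end FeasibleSolution

section AttachSource

variable {α : Type} {v : α} {H : {x // x ≠ v} → {x // x ≠ v} → Prop} {t : {x // x ≠ v}}

variable (H t) in
def attachSource (a b : α) : Prop :=
  (a = v ∧ b = t) ∨ ∃ (ha : a ≠ v) (hb : b ≠ v), H ⟨a, ha⟩ ⟨b, hb⟩

theorem attachSource.ne_right {a b : α} (h : attachSource H t a b) : b ≠ v := by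
  rcases h with ⟨-, rfl⟩ | ⟨-, hb, -⟩
  exacts [t.2, hb]

theorem attachSource_source_iff {b : α} : attachSource H t v b ↔ b = t := by
  simp [attachSource]

@[simp]
theorem attachSource_val_iff {a b : {x // x ≠ v}} : attachSource H t a b ↔ H a b := by
  simp [attachSource, a.2, b.2]

theorem reflTransGen_attachSource_iff {a b : {x // x ≠ v}} :
    ReflTransGen (attachSource H t) a b ↔ ReflTransGen H a b := by
  rw [← reflTransGen_subtype_iff fun _ _ _ h => attachSource.ne_right h]
  simp only [attachSource_val_iff]

theorem transGen_attachSource_iff {a b : {x // x ≠ v}} :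
    TransGen (attachSource H t) a b ↔ TransGen H a b := by
  rw [← transGen_subtype_iff fun _ _ _ h => attachSource.ne_right h]
  simp only [attachSource_val_iff]

theorem not_transGen_attachSource_self (hH : ∀ x, ¬ TransGen H x x) (x : α) :
    ¬ TransGen (attachSource H t) x x := fun hx => by
  obtain ⟨c, -, hcx⟩ := TransGen.tail'_iff.mp hx
  exact hH ⟨x, hcx.ne_right⟩ (transGen_attachSource_iff.mp hx)

theorem ncard_attachSource_succ (x : {x // x ≠ v}) :
    {u | attachSource H t x u}.ncard = {u | H x u}.ncard := by
  rw [← Set.ncard_preimage_of_injective_subset_range (s := {u | attachSource H t x u})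
    Subtype.val_injective fun u hu => ⟨⟨u, attachSource.ne_right hu⟩, rfl⟩]
  exact congrArg Set.ncard (Set.ext fun _ => attachSource_val_iff)

theorem ncard_reach_attachSource_sdiff (s : {x // x ≠ v}) :
    ({u | ReflTransGen (attachSource H t) u s} \ {v}).ncard = {u | ReflTransGen H u s}.ncard := by
  rw [← Set.ncard_preimage_val_ne]
  exact congrArg Set.ncard (Set.ext fun _ => reflTransGen_attachSource_iff)

end AttachSource

theorem feasibleSolution_attachSource {α : Type} [Finite α] {E : α → α → Prop} {lam : ℕ} {v : α}
    {H : {x // x ≠ v} → {x // x ≠ v} → Prop} {t : {x // x ≠ v}}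
    (hH : FeasibleSolution (fun a b : {x // x ≠ v} => E a b) H lam)
    (hin : ∀ x, ¬ E x v) (hvt : E v t) (ht : IsSink E t)
    (hiso : ∀ u, ReflTransGen H u t → u = t) (hlam : 2 ≤ lam) :
    FeasibleSolution E (attachSource H t) lam := by
  have hclosed : ∀ a b, a ≠ v → E a b → b ≠ v := fun a _ _ hab hb => hin a (hb ▸ hab)
  obtain ⟨hHsub, hHacyc, hHout, hHcnt⟩ := hH
  have hsub : ∀ a b, attachSource H t a b → E a b := by
    rintro a b (⟨rfl, rfl⟩ | ⟨_, _, h⟩)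
    exacts [hvt, hHsub _ _ h]
  refine ⟨hsub, not_transGen_attachSource_self hHacyc, fun x hx => ?_, fun s hs => ?_⟩
  · by_cases hxv : x = v
    · have hsucc : {u | attachSource H t v u} = {(t : α)} :=
        Set.ext fun _ => attachSource_source_iff
      rw [hxv, hsucc, Set.ncard_singleton]
    · rw [ncard_attachSource_succ ⟨x, hxv⟩]
      exact hHout _ ((isSink_subtype_iff hclosed).not.mpr hx)
  · lift s to {x // x ≠ v} using fun h => (h ▸ hs) t hvt
    have hcard := ncard_reach_attachSource_sdiff (H := H) (t := t) s
    by_cases hst : s = t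
    · subst hst
      have hreach : {u | ReflTransGen H u s} = {s} :=
        Set.ext fun u => ⟨hiso u, fun h => h ▸ .refl⟩
      calc _ ≤ ({u | ReflTransGen (attachSource H s) u s} \ {v}).ncard + ({v} : Set α).ncard :=
            Set.ncard_le_ncard_sdiff_add_ncard _ _
        _ = 2 := by
          rw [hcard, hreach, Set.ncard_singleton, Set.ncard_singleton]
        _ ≤ lam := hlam
    · have hvs : v ∉ {u | ReflTransGen (attachSource H t) u s} := by
        intro h
        rcases h.cases_head with h | ⟨c, hvc, hcs⟩
        · exact s.2 h.symm
        · rw [attachSource_source_iff] at hvc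
          subst hvc
          exact hst (Subtype.ext (hcs.eq_of_forall_not_rel fun c h => ht c (hsub _ _ h)).symm)
      rw [← Set.sdiff_singleton_eq_self hvs, hcard]
      exact hHcnt _ ((isSink_subtype_iff hclosed).mpr hs)

theorem stmt_15_general {V : Type} [Fintype V]
    (E : V → V → Prop)
    (lam : ℕ) (hlam : 2 ≤ lam)
    (v : V) (hv : ¬ IsSink E v)
    (hin : ∀ x, ¬ E x v)
    (hk : Set.ncard {x | ¬ IsSink E x} ≤ Set.ncard {u | E v u ∧ IsSink E u}) :
    YesInstance E lam ↔
    YesInstance (fun (x y : {x : V // x ≠ v}) => E x.1 y.1) lam := by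
  have hclosed : ∀ a b, a ≠ v → E a b → b ≠ v := fun a _ _ hab hb => hin a (hb ▸ hab)
  refine ⟨fun ⟨H, hH⟩ => ⟨_, hH.restrict hclosed⟩, fun ⟨H, hH⟩ => ?_⟩
  have hcard : {x | ¬ IsSink (fun a b : {x // x ≠ v} => E a b) x}.ncard <
      (Subtype.val ⁻¹' {u | E v u ∧ IsSink E u} : Set {x // x ≠ v}).ncard := by
    have hv' : v ∉ {u | E v u ∧ IsSink E u} := fun h => hv h.2
    calc _ = ({x | ¬ IsSink E x} \ {v}).ncard := by
          rw [← Set.ncard_preimage_val_ne]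
          exact congrArg Set.ncard (Set.ext fun x => (isSink_subtype_iff hclosed).not)
      _ < {x | ¬ IsSink E x}.ncard := Set.ncard_sdiff_singleton_lt_of_mem hv
      _ ≤ _ := hk
      _ = _ := by rw [Set.ncard_preimage_val_ne, Set.sdiff_singleton_eq_self hv']
  obtain ⟨t, ⟨hvt, ht⟩, hiso⟩ :=
    hH.exists_isolated_sink (fun t ht => (isSink_subtype_iff hclosed).mpr ht.2) hcard
  exact ⟨_, feasibleSolution_attachSource hH hin hvt ht hiso hlam⟩

/-- reduction rule RD.3.  Let `k` be the number of non-sink vertices and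
let `λ ≥ 2`.  If the non-sink vertex `v` has in-degree 0 and at least `k` of its
out-neighbors are sinks, then `(G, λ)` is a yes-instance iff `(G - v, λ)` is. -/
theorem stmt_15 {V : Type} [Fintype V] [DecidableEq V]
    (E : V → V → Prop) (hloop : ∀ x, ¬ E x x)
    (lam : ℕ) (hlam : 2 ≤ lam)
    (v : V) (hv : ¬ IsSink E v)
    (hin : ∀ x, ¬ E x v)
    (hk : Set.ncard {x | ¬ IsSink E x} ≤ Set.ncard {u | E v u ∧ IsSink E u}) :
    YesInstance E lam ↔
    YesInstance (fun (x y : {x : V // x ≠ v}) => E x.1 y.1) lam :=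
  stmt_15_general E lam hlam v hv hin hk
end
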